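/- Let 0 ≤ k ≤ h−1, let y = (y_0, …, y_k) be an eigenvector of S_k with eigenvalue λ, let v be a vertex of the complete d-ary tree T_h with ℓ(v) = h−k−1, and let i, j ∈ {1,…,d} be distinct. Define f_{y,v,i,j} : V(T_h) → ℂ by f_{y,v,i,j}(w) = y_{ℓ(w)−ℓ(v)−1} for w ∈ T_i^v, f_{y,v,i,j}(w) = −y_{ℓ(w)−ℓ(v)−1} for w ∈ T_j^v, and f_{y,v,i,j}(w) = 0 otherwise. Then f_{y,v,i,j} is an eigenvector of Q_h with eigenvalue λ, and the d−1 vectors f_{y,v,i,i+1} for 1 ≤ i ≤ d−1 are linearly independent. -/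
import Mathlib


open Matrix

/-- Vertices of the complete `d`-ary tree of height `h`: words over `{0,…,d-1}`
of length at most `h` (encoded as a level `l ≤ h` together with a word of length `l`). -/
abbrev Vtx (d h : ℕ) : Type := Σ l : Fin (h + 1), Fin l.val → Fin d

/-- The word (from the root) corresponding to a vertex. -/
def toWord {d h : ℕ} (v : Vtx d h) : List (Fin d) := List.ofFn v.2

/-- The level of a vertex, i.e. its distance from the root. -/
def lvl {d h : ℕ} (v : Vtx d h) : ℕ := v.1.val

/-- Adjacency in the tree: one vertex is obtained from the other by appending one letter. -/
def adj {d h : ℕ} (v w : Vtx d h) : Prop :=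
  (∃ a : Fin d, toWord w = toWord v ++ [a]) ∨ ∃ a : Fin d, toWord v = toWord w ++ [a]

-- The transition matrix of the simple random walk on the complete `d`-ary tree of
-- height `h`: probability `1/(d+1)` along each edge, holding probability `1/(d+1)` at the
-- root and `d/(d+1)` at each leaf.
open scoped Classical in
noncomputable def Q (d h : ℕ) : Matrix (Vtx d h) (Vtx d h) ℂ := fun v w =>
  if adj v w then 1 / (d + 1)
  else if v = w ∧ lvl v = 0 then 1 / (d + 1)
  else if v = w ∧ lvl v = h then (d : ℂ) / (d + 1)
  else 0

/-- `inSub v c w` means that `w` belongs to the complete subtree `T_c^v` rooted at the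
child of `v` labelled `c`. -/
def inSub {d h : ℕ} (v : Vtx d h) (c : Fin d) (w : Vtx d h) : Prop :=
  (toWord v ++ [c]) <+: toWord w

/-- The matrix S_k on states {0,…,k}: S(0,1)=d/(d+1), S(l,l−1)=1/(d+1) and
S(l,l+1)=d/(d+1) for 1 ≤ l ≤ k−1, S(k,k−1)=1/(d+1), S(k,k)=d/(d+1); in particular
S(0,0)=0, so S_k is substochastic. -/
noncomputable def Smat (d k : ℕ) : Matrix (Fin (k + 1)) (Fin (k + 1)) ℂ := fun l m =>
  if (m : ℕ) = (l : ℕ) + 1 then (d : ℂ) / (d + 1)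
  else if (l : ℕ) = (m : ℕ) + 1 then 1 / (d + 1)
  else if l = m ∧ (l : ℕ) = k then (d : ℂ) / (d + 1)
  else 0

/-- Extension of a vector indexed by `Fin (k+1)` to ℕ (by zero out of range). -/
def yext {k : ℕ} (y : Fin (k + 1) → ℂ) (n : ℕ) : ℂ :=
  if hn : n < k + 1 then y ⟨n, hn⟩ else 0

-- The lift f_{y,v,i,j} of a vector y on {0,…,k}: it equals y_{lvl w − lvl v − 1} on the
-- subtree rooted at the child of v labelled c1, its negative on the subtree rooted at
-- the child labelled c2, and 0 elsewhere.
open scoped Classical in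
noncomputable def flift (d h k : ℕ) (y : Fin (k + 1) → ℂ) (v : Vtx d h) (c1 c2 : Fin d) :
    Vtx d h → ℂ := fun w =>
  if inSub v c1 w then yext y (lvl w - lvl v - 1)
  else if inSub v c2 w then -(yext y (lvl w - lvl v - 1))
  else 0

section Aux
variable {d h : ℕ}

@[simp] lemma length_toWord (v : Vtx d h) : (toWord v).length = lvl v := by
  simp [toWord, lvl]

lemma toWord_injective : Function.Injective (toWord (d := d) (h := h)) := by
  rintro ⟨⟨l, hl⟩, f⟩ ⟨⟨m, hm⟩, g⟩ hfg
  have hlm : l = m := by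
    have := congrArg List.length hfg
    simpa [toWord] using this
  subst hlm
  simp only [toWord] at hfg
  have := List.ofFn_injective hfg
  subst this; rfl

def ofWord (L : List (Fin d)) (hL : L.length ≤ h) : Vtx d h :=
  ⟨⟨L.length, Nat.lt_succ_of_le hL⟩, fun t => L.get ⟨t.1, t.2⟩⟩

@[simp] lemma toWord_ofWord (L : List (Fin d)) (hL : L.length ≤ h) :
    toWord (ofWord L hL) = L := by
  simp [toWord, ofWord]

def child (w : Vtx d h) (hw : lvl w < h) (a : Fin d) : Vtx d h :=
  ofWord (toWord w ++ [a]) (by simp; omega)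

def parent (w : Vtx d h) : Vtx d h :=
  ofWord (toWord w).dropLast (by rw [List.length_dropLast, length_toWord]; unfold lvl; have := w.1.isLt; omega)

@[simp] lemma toWord_child (w : Vtx d h) (hw : lvl w < h) (a : Fin d) :
    toWord (child w hw a) = toWord w ++ [a] := toWord_ofWord _ _

@[simp] lemma toWord_parent (w : Vtx d h) : toWord (parent w) = (toWord w).dropLast :=
  toWord_ofWord _ _

@[simp] lemma lvl_child (w : Vtx d h) (hw : lvl w < h) (a : Fin d) :
    lvl (child w hw a) = lvl w + 1 := by
  rw [← length_toWord, toWord_child]; simp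

@[simp] lemma lvl_parent (w : Vtx d h) : lvl (parent w) = lvl w - 1 := by
  rw [← length_toWord, toWord_parent]; simp

lemma not_adj_self (w : Vtx d h) : ¬ adj w w := by
  rintro (⟨a, ha⟩ | ⟨a, ha⟩) <;>
  · have := congrArg List.length ha; simp at this

end Aux
section Aux2
variable {d h : ℕ}

lemma inSub.lvl_lt {v : Vtx d h} {c : Fin d} {w : Vtx d h} (hs : inSub v c w) :
    lvl v + 1 ≤ lvl w := by
  have := hs.length_le; simpa using this

lemma not_inSub_self (v : Vtx d h) (c : Fin d) : ¬ inSub v c v := by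
  intro hs; have := hs.lvl_lt; omega

lemma inSub_ne {v : Vtx d h} {c : Fin d} {w : Vtx d h} (hs : inSub v c w) : w ≠ v := by
  rintro rfl; exact not_inSub_self _ _ hs

lemma inSub_unique {v : Vtx d h} {c c' : Fin d} {w : Vtx d h}
    (hs : inSub v c w) (hs' : inSub v c' w) : c = c' := by
  have h1 := List.prefix_of_prefix_length_le hs hs' (by simp)
  have h2 := h1.eq_of_length (by simp)
  have := (List.append_inj h2 rfl).2
  simpa using this

lemma inSub_child_iff {v : Vtx d h} {c : Fin d} {w : Vtx d h} (hw : lvl w < h) (a : Fin d) :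
    inSub v c (child w hw a) ↔ inSub v c w ∨ (w = v ∧ a = c) := by
  constructor
  · intro hs
    unfold inSub at hs
    rw [toWord_child] at hs
    rcases Nat.lt_or_ge (lvl v + 1) (lvl w + 1) with hlt | hge
    · left
      exact List.prefix_of_prefix_length_le hs (List.prefix_append _ _) (by simp; omega)
    · right
      have hlen : (toWord v ++ [c]).length = (toWord w ++ [a]).length := by
        have := hs.length_le; simp at this ⊢; omega
      have heq := hs.eq_of_length hlen
      obtain ⟨h1, h2⟩ := List.append_inj heq (by simp at hlen ⊢; omega)
      exact ⟨(toWord_injective h1).symm, by simpa using h2.symm⟩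
  · rintro (hs | ⟨rfl, rfl⟩)
    · exact hs.trans (by rw [toWord_child]; exact List.prefix_append _ _)
    · unfold inSub; rw [toWord_child]

lemma inSub_parent_of {v : Vtx d h} {c : Fin d} {w : Vtx d h}
    (hs : inSub v c w) (hlt : lvl v + 1 < lvl w) : inSub v c (parent w) := by
  unfold inSub at hs ⊢
  rw [toWord_parent, List.dropLast_eq_take, List.prefix_take_iff]
  exact ⟨hs, by simp; omega⟩

lemma parent_eq_of_inSub {v : Vtx d h} {c : Fin d} {w : Vtx d h}
    (hs : inSub v c w) (hle : lvl w = lvl v + 1) : parent w = v := by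
  have heq : toWord w = toWord v ++ [c] := (hs.eq_of_length (by simp; omega)).symm
  apply toWord_injective
  rw [toWord_parent, heq, List.dropLast_concat]

lemma inSub_of_inSub_parent {v : Vtx d h} {c : Fin d} {w : Vtx d h}
    (hs : inSub v c (parent w)) : inSub v c w :=
  hs.trans (by rw [toWord_parent]; exact List.dropLast_prefix _)

lemma exists_inSub_of_parent_eq {v w : Vtx d h} (h0 : 0 < lvl w) (hp : parent w = v) :
    ∃ c : Fin d, inSub v c w := by
  have hne : toWord w ≠ [] := by
    intro hnil; have := congrArg List.length hnil; simp at this; omega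
  refine ⟨(toWord w).getLast hne, ?_⟩
  unfold inSub
  rw [← hp, toWord_parent, List.dropLast_append_getLast hne]

end Aux2
section Aux3
variable {d h : ℕ}

open scoped Classical

lemma adj_iff_mem (hh : 1 ≤ h) (w : Vtx d h) (u : Vtx d h) :
    adj w u ↔ u ∈ ((if 0 < lvl w then ({parent w} : Finset (Vtx d h)) else ∅) ∪
      (if hw : lvl w < h then Finset.image (child w hw) Finset.univ else ∅)) := by
  constructor
  · rintro (⟨a, ha⟩ | ⟨a, ha⟩)
    · have hlu : lvl u = lvl w + 1 := by
        have := congrArg List.length ha; simpa using this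
      have hw : lvl w < h := by have := u.1.isLt; unfold lvl at *; omega
      have hu : u = child w hw a := toWord_injective (by rw [toWord_child, ha])
      rw [Finset.mem_union]
      right
      rw [dif_pos hw]
      exact Finset.mem_image.2 ⟨a, Finset.mem_univ _, hu.symm⟩
    · have hlw : lvl w = lvl u + 1 := by
        have := congrArg List.length ha; simpa using this
      have hp : parent w = u := by
        apply toWord_injective
        rw [toWord_parent, ha, List.dropLast_concat]
      rw [Finset.mem_union]
      left
      rw [if_pos (show 0 < lvl w by omega)]
      exact Finset.mem_singleton.2 hp.symm
  · intro hu
    simp only [Finset.mem_union] at hu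
    rcases hu with hu | hu
    · right
      split_ifs at hu with h0
      · simp only [Finset.mem_singleton] at hu
        subst hu
        have hne : toWord w ≠ [] := by
          intro hnil; have := congrArg List.length hnil; simp at this; omega
        exact ⟨(toWord w).getLast hne, by
          rw [toWord_parent]; exact (List.dropLast_append_getLast hne).symm⟩
      · simp at hu
    · left
      split_ifs at hu with h0
      · simp only [Finset.mem_image, Finset.mem_univ, true_and] at hu
        obtain ⟨a, rfl⟩ := hu
        exact ⟨a, toWord_child _ _ _⟩
      · simp at hu

lemma mulVec_Q (hh : 1 ≤ h) (f : Vtx d h → ℂ) (w : Vtx d h) :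
    (Q d h).mulVec f w =
      (1/((d : ℂ)+1)) * ((if 0 < lvl w then f (parent w) else 0)
        + (if hw : lvl w < h then ∑ a : Fin d, f (child w hw a) else 0))
      + (if lvl w = 0 then (1/((d : ℂ)+1)) * f w else 0)
      + (if lvl w = h then ((d : ℂ)/((d : ℂ)+1)) * f w else 0) := by
  classical
  have hptw : ∀ u, Q d h w u * f u =
      (if adj w u then (1/((d : ℂ)+1)) * f u else 0)
      + (if u = w then ((if lvl w = 0 then (1/((d : ℂ)+1)) else if lvl w = h then ((d : ℂ)/((d : ℂ)+1)) else 0) * f u) else 0) := by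
    intro u
    unfold Q
    by_cases h1 : adj w u
    · have hne : u ≠ w := by rintro rfl; exact not_adj_self u h1
      simp [h1, hne]
    · by_cases h2 : u = w
      · subst h2
        by_cases h3 : lvl u = 0
        · have h4 : lvl u ≠ h := by omega
          simp [h1, h3, h4]
        · by_cases h4 : lvl u = h
          · simp [h1, h3, h4]
          · simp [h1, h3, h4]
      · have h2' : w ≠ u := fun hc => h2 hc.symm
        simp [h1, h2, h2']
  unfold Matrix.mulVec dotProduct
  rw [Finset.sum_congr rfl (fun u _ => hptw u), Finset.sum_add_distrib]
  rw [Finset.sum_ite_eq' Finset.univ w (fun u => _ * f u)]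
  have hsum1 : ∑ u : Vtx d h, (if adj w u then (1/((d : ℂ)+1)) * f u else 0)
      = (1/((d : ℂ)+1)) * ((if 0 < lvl w then f (parent w) else 0)
        + (if hw : lvl w < h then ∑ a : Fin d, f (child w hw a) else 0)) := by
    have hpt2 : ∀ u : Vtx d h, (if adj w u then (1/((d : ℂ)+1)) * f u else 0)
        = (1/((d : ℂ)+1)) * (if u ∈ ((if 0 < lvl w then ({parent w} : Finset (Vtx d h)) else ∅) ∪
          (if hw : lvl w < h then Finset.image (child w hw) Finset.univ else ∅)) then f u else 0) := by
      intro u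
      by_cases hadj : adj w u
      · rw [if_pos hadj, if_pos ((adj_iff_mem hh w u).1 hadj)]
      · rw [if_neg hadj, if_neg (fun hm => hadj ((adj_iff_mem hh w u).2 hm)), mul_zero]
    rw [Finset.sum_congr rfl (fun u _ => hpt2 u), ← Finset.mul_sum]
    congr 1
    rw [Finset.sum_ite_mem, Finset.univ_inter]
    have hdisj : Disjoint (if 0 < lvl w then ({parent w} : Finset (Vtx d h)) else ∅)
        (if hw : lvl w < h then Finset.image (child w hw) Finset.univ else ∅) := by
      rw [Finset.disjoint_left]
      intro u hu1 hu2
      split_ifs at hu1 hu2 with h0 h1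
      · simp only [Finset.mem_singleton] at hu1
        simp only [Finset.mem_image, Finset.mem_univ, true_and] at hu2
        obtain ⟨a, ha⟩ := hu2
        subst hu1
        have e1 : lvl (parent w) = lvl w - 1 := lvl_parent w
        rw [← ha, lvl_child] at e1
        omega
      · simp at hu2
      · simp at hu1
      · simp at hu1
    rw [Finset.sum_union hdisj]
    congr 1
    · split_ifs <;> simp
    · split_ifs with h1
      · have hinj : ∀ a ∈ Finset.univ, ∀ b ∈ Finset.univ,
            child w h1 a = child w h1 b → a = b := by
          intro a _ b _ hab
          have hab2 := congrArg toWord hab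
          simp only [toWord_child] at hab2
          simpa using (List.append_inj hab2 rfl).2
        rw [Finset.sum_image hinj]
      · simp
  rw [hsum1]
  simp only [Finset.mem_univ, if_true]
  have hh0 : h ≠ 0 := by omega
  by_cases e1 : lvl w = 0
  · have e2 : lvl w ≠ h := by omega
    simp [e1, e2, hh0, Ne.symm hh0]
  · by_cases e2 : lvl w = h
    · simp only [e1, e2, if_false, if_true, hh0]
      ring
    · simp [e1, e2, hh0]

end Aux3
section Aux4

lemma sum_if_nat {m : ℕ} (c : ℕ) (g : Fin m → ℂ) :
    (∑ t : Fin m, if (t : ℕ) = c then g t else 0) = if hc : c < m then g ⟨c, hc⟩ else 0 := by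
  split_ifs with hc
  · have h1 : ∀ t : Fin m, (if (t : ℕ) = c then g t else 0)
        = (if t = ⟨c, hc⟩ then g t else 0) := by
      intro t
      simp [Fin.ext_iff]
    rw [Finset.sum_congr rfl (fun t _ => h1 t), Finset.sum_ite_eq' Finset.univ ⟨c, hc⟩ g]
    simp
  · apply Finset.sum_eq_zero
    intro t _
    rw [if_neg]
    intro ht
    exact hc (ht ▸ t.isLt)

lemma yext_val {k : ℕ} (y : Fin (k + 1) → ℂ) (l : Fin (k + 1)) :
    yext y (l : ℕ) = y l := by
  simp [yext, l.isLt]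

lemma Smat_mulVec (d k : ℕ) (y : Fin (k + 1) → ℂ) (l : Fin (k + 1)) :
    (Smat d k).mulVec y l =
      ((d : ℂ)/((d : ℂ)+1)) * yext y ((l : ℕ)+1)
      + (if 0 < (l : ℕ) then (1/((d : ℂ)+1)) * yext y ((l : ℕ)-1) else 0)
      + (if (l : ℕ) = k then ((d : ℂ)/((d : ℂ)+1)) * yext y (l : ℕ) else 0) := by
  classical
  unfold Matrix.mulVec dotProduct
  have hpt : ∀ m : Fin (k + 1), Smat d k l m * y m =
      (if (m : ℕ) = (l : ℕ)+1 then ((d : ℂ)/((d : ℂ)+1)) * y m else 0)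
      + (if (l : ℕ) = (m : ℕ)+1 then (1/((d : ℂ)+1)) * y m else 0)
      + (if l = m ∧ (l : ℕ) = k then ((d : ℂ)/((d : ℂ)+1)) * y m else 0) := by
    intro m
    unfold Smat
    by_cases h1 : (m : ℕ) = (l : ℕ)+1
    · have h2 : ¬ (l : ℕ) = (m : ℕ)+1 := by omega
      have h3 : ¬ (l = m ∧ (l : ℕ) = k) := by rintro ⟨rfl, _⟩; omega
      rw [if_pos h1, if_pos h1, if_neg h2, if_neg h3]
      ring
    · by_cases h2 : (l : ℕ) = (m : ℕ)+1
      · have h3 : ¬ (l = m ∧ (l : ℕ) = k) := by rintro ⟨rfl, _⟩; omega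
        rw [if_neg h1, if_neg h1, if_pos h2, if_pos h2, if_neg h3]
        ring
      · by_cases h3 : l = m ∧ (l : ℕ) = k
        · rw [if_neg h1, if_neg h1, if_neg h2, if_neg h2, if_pos h3, if_pos h3]
          ring
        · rw [if_neg h1, if_neg h1, if_neg h2, if_neg h2, if_neg h3, if_neg h3]
          ring
  rw [Finset.sum_congr rfl (fun m _ => hpt m), Finset.sum_add_distrib, Finset.sum_add_distrib]
  congr 1
  · congr 1
    · rw [sum_if_nat ((l : ℕ)+1) (fun m => ((d : ℂ)/((d : ℂ)+1)) * y m)]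
      unfold yext
      split_ifs with hc <;> simp
    · by_cases h0 : 0 < (l : ℕ)
      · rw [if_pos h0]
        have hcong : ∀ m : Fin (k+1), (if (l : ℕ) = (m : ℕ)+1 then (1/((d : ℂ)+1)) * y m else 0)
            = (if (m : ℕ) = (l : ℕ)-1 then (1/((d : ℂ)+1)) * y m else 0) := by
          intro m
          have : ((l : ℕ) = (m : ℕ)+1) ↔ ((m : ℕ) = (l : ℕ)-1) := by omega
          simp only [this]
        rw [Finset.sum_congr rfl (fun m _ => hcong m),
          sum_if_nat ((l : ℕ)-1) (fun m => (1/((d : ℂ)+1)) * y m)]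
        have hlt : (l : ℕ)-1 < k+1 := by have := l.isLt; omega
        rw [dif_pos hlt]
        unfold yext
        rw [dif_pos hlt]
      · rw [if_neg h0]
        apply Finset.sum_eq_zero
        intro m _
        rw [if_neg (by omega)]
  · by_cases hk : (l : ℕ) = k
    · rw [if_pos hk]
      have hcong : ∀ m : Fin (k+1), (if l = m ∧ (l : ℕ) = k then ((d : ℂ)/((d : ℂ)+1)) * y m else 0)
          = (if m = l then ((d : ℂ)/((d : ℂ)+1)) * y m else 0) := by
        intro m
        have : (l = m ∧ (l : ℕ) = k) ↔ (m = l) := by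
          constructor
          · rintro ⟨rfl, _⟩; rfl
          · rintro rfl; exact ⟨rfl, hk⟩
        simp only [this]
      rw [Finset.sum_congr rfl (fun m _ => hcong m),
        Finset.sum_ite_eq' Finset.univ l (fun m => ((d : ℂ)/((d : ℂ)+1)) * y m)]
      rw [yext_val]
      simp
    · rw [if_neg hk]
      apply Finset.sum_eq_zero
      intro m _
      rw [if_neg (by rintro ⟨_, hc⟩; exact hk hc)]

end Aux4
section Aux5
variable {d h k : ℕ}

def probe (v : Vtx d h) (s : Fin d) (n : ℕ) (hl : lvl v + n + 1 ≤ h) : Vtx d h :=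
  ofWord (toWord v ++ s :: List.replicate n s) (by simp; omega)

@[simp] lemma toWord_probe (v : Vtx d h) (s : Fin d) (n : ℕ) (hl : lvl v + n + 1 ≤ h) :
    toWord (probe v s n hl) = toWord v ++ s :: List.replicate n s := toWord_ofWord _ _

@[simp] lemma lvl_probe (v : Vtx d h) (s : Fin d) (n : ℕ) (hl : lvl v + n + 1 ≤ h) :
    lvl (probe v s n hl) = lvl v + n + 1 := by
  rw [← length_toWord, toWord_probe]; simp; omega

lemma inSub_probe_iff (v : Vtx d h) (s : Fin d) (n : ℕ) (hl : lvl v + n + 1 ≤ h) (c : Fin d) :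
    inSub v c (probe v s n hl) ↔ c = s := by
  unfold inSub
  rw [toWord_probe]
  constructor
  · intro hp
    have hps : toWord v ++ [s] <+: toWord v ++ s :: List.replicate n s :=
      ⟨List.replicate n s, by simp⟩
    have h1 := List.prefix_of_prefix_length_le hp hps (by simp)
    have heq := h1.eq_of_length (by simp)
    simpa using (List.append_inj heq rfl).2
  · rintro rfl
    exact ⟨List.replicate n c, by simp⟩

lemma flift_of_inSub1 (y : Fin (k+1) → ℂ) (v : Vtx d h) (c1 c2 : Fin d) (w : Vtx d h)
    (hw : inSub v c1 w) :
    flift d h k y v c1 c2 w = yext y (lvl w - lvl v - 1) := by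
  unfold flift; rw [if_pos hw]

lemma flift_of_inSub2 (y : Fin (k+1) → ℂ) (v : Vtx d h) (c1 c2 : Fin d) (hij : c1 ≠ c2)
    (w : Vtx d h) (hw : inSub v c2 w) :
    flift d h k y v c1 c2 w = -(yext y (lvl w - lvl v - 1)) := by
  unfold flift
  rw [if_neg (fun hc => hij (inSub_unique hc hw)), if_pos hw]

lemma flift_of_not (y : Fin (k+1) → ℂ) (v : Vtx d h) (c1 c2 : Fin d) (w : Vtx d h)
    (h1 : ¬ inSub v c1 w) (h2 : ¬ inSub v c2 w) :
    flift d h k y v c1 c2 w = 0 := by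
  unfold flift; rw [if_neg h1, if_neg h2]

lemma flift_self (y : Fin (k+1) → ℂ) (v : Vtx d h) (c1 c2 : Fin d) :
    flift d h k y v c1 c2 v = 0 :=
  flift_of_not y v c1 c2 v (not_inSub_self v c1) (not_inSub_self v c2)

lemma flift_probe (y : Fin (k+1) → ℂ) (v : Vtx d h) (c1 c2 : Fin d) (hij : c1 ≠ c2)
    (s : Fin d) (n : ℕ) (hl : lvl v + n + 1 ≤ h) (hnk : n < k + 1) :
    flift d h k y v c1 c2 (probe v s n hl) =
      if c1 = s then y ⟨n, hnk⟩ else if c2 = s then -(y ⟨n, hnk⟩) else 0 := by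
  have harg : lvl (probe v s n hl) - lvl v - 1 = n := by rw [lvl_probe]; omega
  by_cases h1 : c1 = s
  · rw [if_pos h1, flift_of_inSub1 y v c1 c2 _ ((inSub_probe_iff v s n hl c1).2 h1), harg]
    simp [yext, hnk]
  · rw [if_neg h1]
    by_cases h2 : c2 = s
    · rw [if_pos h2, flift_of_inSub2 y v c1 c2 hij _ ((inSub_probe_iff v s n hl c2).2 h2), harg]
      simp [yext, hnk]
    · rw [if_neg h2, flift_of_not y v c1 c2 _
        (fun hc => h1 ((inSub_probe_iff v s n hl c1).1 hc))
        (fun hc => h2 ((inSub_probe_iff v s n hl c2).1 hc))]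

end Aux5
/-- Lifting an eigenvector y of S_k with eigenvalue λ at a vertex v of level h−k−1 and a
pair of distinct children i ≠ j gives an eigenvector of Q_h with eigenvalue λ; moreover
the d−1 lifts along consecutive pairs of children are linearly independent. -/
theorem stmt_11 (d h k : ℕ) (hd : 2 ≤ d) (hh : 1 ≤ h) (hk : k ≤ h - 1)
    (y : Fin (k + 1) → ℂ) (μ : ℂ) (hy : y ≠ 0) (heig : (Smat d k).mulVec y = μ • y)
    (v : Vtx d h) (hv : lvl v = h - k - 1) (i j : Fin d) (hij : i ≠ j) :
    (flift d h k y v i j ≠ 0 ∧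
      (Q d h).mulVec (flift d h k y v i j) = μ • flift d h k y v i j) ∧
    LinearIndependent ℂ (fun t : Fin (d - 1) =>
      flift d h k y v ⟨t.1, by have := t.isLt; omega⟩
        ⟨t.1 + 1, by have := t.isLt; omega⟩) := by
  classical
  have hvk : lvl v + k + 1 = h := by omega
  obtain ⟨l0, hl0⟩ := Function.ne_iff.1 hy
  have hlen : lvl v + (l0 : ℕ) + 1 ≤ h := by have := l0.isLt; omega
  constructor
  · constructor
    · -- nonzero
      intro hf0
      have h1 : flift d h k y v i j (probe v i (l0 : ℕ) hlen) = 0 := by rw [hf0]; rfl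
      rw [flift_probe y v i j hij i (l0 : ℕ) hlen l0.isLt, if_pos rfl] at h1
      exact hl0 (by simpa using h1)
    · -- eigenvector equation
      funext w
      rw [mulVec_Q hh (flift d h k y v i j) w, Pi.smul_apply, smul_eq_mul]
      by_cases hwv : w = v
      · subst hwv
        have hpar : (if 0 < lvl w then flift d h k y w i j (parent w) else 0) = 0 := by
          split_ifs with h0
          · apply flift_of_not
            · intro hc; have := hc.lvl_lt; rw [lvl_parent] at this; omega
            · intro hc; have := hc.lvl_lt; rw [lvl_parent] at this; omega
          · rfl
        have hvh : lvl w < h := by omega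
        have hchild : (if hw : lvl w < h then
            ∑ a : Fin d, flift d h k y w i j (child w hw a) else 0) = 0 := by
          rw [dif_pos hvh]
          have hpt : ∀ a : Fin d, flift d h k y w i j (child w hvh a)
              = (if a = i then yext y 0 else 0) + (if a = j then -(yext y 0) else 0) := by
            intro a
            have harg : lvl (child w hvh a) - lvl w - 1 = 0 := by rw [lvl_child]; omega
            by_cases h1 : a = i
            · rw [if_pos h1, if_neg (by rw [h1]; exact hij)]
              rw [flift_of_inSub1 _ _ _ _ _ ((inSub_child_iff hvh a).2 (Or.inr ⟨rfl, h1⟩)), harg]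
              ring
            · rw [if_neg h1]
              by_cases h2 : a = j
              · rw [if_pos h2]
                rw [flift_of_inSub2 _ _ _ _ hij _ ((inSub_child_iff hvh a).2 (Or.inr ⟨rfl, h2⟩)), harg]
                ring
              · rw [if_neg h2]
                rw [flift_of_not _ _ _ _ _
                  (fun hc => by rcases (inSub_child_iff hvh a).1 hc with hcw | ⟨_, hr⟩
                                · exact not_inSub_self _ _ hcw
                                · exact h1 hr)
                  (fun hc => by rcases (inSub_child_iff hvh a).1 hc with hcw | ⟨_, hr⟩
                                · exact not_inSub_self _ _ hcw
                                · exact h2 hr)]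
                ring
          rw [Finset.sum_congr rfl (fun a _ => hpt a), Finset.sum_add_distrib,
            Finset.sum_ite_eq' Finset.univ i (fun _ => yext y 0),
            Finset.sum_ite_eq' Finset.univ j (fun _ => -(yext y 0))]
          simp
        rw [hpar, hchild, flift_self]
        simp
      · by_cases hsub : inSub v i w ∨ inSub v j w
        · obtain ⟨c, s, hc, hfw⟩ : ∃ (c : Fin d) (s : ℂ), inSub v c w ∧
              ∀ u, inSub v c u →
                flift d h k y v i j u = s * yext y (lvl u - lvl v - 1) := by
            rcases hsub with hci | hcj
            · exact ⟨i, 1, hci, fun u hu => by rw [flift_of_inSub1 y v i j u hu, one_mul]⟩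
            · exact ⟨j, -1, hcj, fun u hu => by rw [flift_of_inSub2 y v i j hij u hu]; ring⟩
          set n := lvl w - lvl v - 1 with hn
          have hlw : lvl w = lvl v + 1 + n := by have := hc.lvl_lt; omega
          have hwh : lvl w ≤ h := by have := w.1.isLt; unfold lvl at *; omega
          have hn1 : n < k + 1 := by omega
          have hS := congrFun heig ⟨n, hn1⟩
          rw [Smat_mulVec, Pi.smul_apply, smul_eq_mul] at hS
          have hyn : y ⟨n, hn1⟩ = yext y n := by simp [yext, hn1]
          rw [hyn] at hS
          have hpar : (if 0 < lvl w then flift d h k y v i j (parent w) else 0)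
              = (if 0 < n then s * yext y (n - 1) else 0) := by
            rw [if_pos (by omega)]
            by_cases h0 : 0 < n
            · rw [if_pos h0, hfw _ (inSub_parent_of hc (by omega)), lvl_parent,
                show lvl w - 1 - lvl v - 1 = n - 1 by omega]
            · rw [if_neg h0, parent_eq_of_inSub hc (by omega), flift_self]
          have hfww : flift d h k y v i j w = s * yext y n := hfw w hc
          rw [hpar, hfww]
          by_cases hcase : n < k
          · have hwlth : lvl w < h := by omega
            have hchild : (if hw : lvl w < h then
                ∑ a : Fin d, flift d h k y v i j (child w hw a) else 0)
                = (d : ℂ) * (s * yext y (n + 1)) := by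
              rw [dif_pos hwlth]
              have hpt : ∀ a : Fin d, flift d h k y v i j (child w hwlth a)
                  = s * yext y (n + 1) := by
                intro a
                rw [hfw _ ((inSub_child_iff hwlth a).2 (Or.inl hc)), lvl_child,
                  show lvl w + 1 - lvl v - 1 = n + 1 by omega]
              rw [Finset.sum_congr rfl (fun a _ => hpt a), Finset.sum_const]
              simp [mul_comm]
            rw [hchild, if_neg (by omega : ¬ lvl w = 0), if_neg (by omega : ¬ lvl w = h)]
            rw [if_neg (by omega : ¬ n = k)] at hS
            by_cases h0 : 0 < n
            · rw [if_pos h0] at hS ⊢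
              linear_combination s * hS
            · rw [if_neg h0] at hS ⊢
              linear_combination s * hS
          · have hnk' : n = k := by omega
            have hwh' : lvl w = h := by omega
            have hchild : (if hw : lvl w < h then
                ∑ a : Fin d, flift d h k y v i j (child w hw a) else 0) = 0 := by
              rw [dif_neg (by omega)]
            rw [hchild, if_neg (by omega : ¬ lvl w = 0), if_pos hwh']
            rw [if_pos hnk'] at hS
            have hz : yext y (n + 1) = 0 := by rw [hnk']; simp [yext]
            rw [hz] at hS
            by_cases h0 : 0 < n
            · rw [if_pos h0] at hS ⊢
              linear_combination s * hS
            · rw [if_neg h0] at hS ⊢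
              linear_combination s * hS
        · push_neg at hsub
          obtain ⟨h1, h2⟩ := hsub
          have hfw0 : flift d h k y v i j w = 0 := flift_of_not _ _ _ _ _ h1 h2
          have hpar : (if 0 < lvl w then flift d h k y v i j (parent w) else 0) = 0 := by
            split_ifs with h0
            · exact flift_of_not _ _ _ _ _ (fun hcp => h1 (inSub_of_inSub_parent hcp))
                (fun hcp => h2 (inSub_of_inSub_parent hcp))
            · rfl
          have hchild : (if hw : lvl w < h then
              ∑ a : Fin d, flift d h k y v i j (child w hw a) else 0) = 0 := by
            split_ifs with h0
            · apply Finset.sum_eq_zero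
              intro a _
              apply flift_of_not
              · intro hcc
                rcases (inSub_child_iff h0 a).1 hcc with hcw | ⟨hwv', _⟩
                · exact h1 hcw
                · exact hwv hwv'
              · intro hcc
                rcases (inSub_child_iff h0 a).1 hcc with hcw | ⟨hwv', _⟩
                · exact h2 hcw
                · exact hwv hwv'
            · rfl
          rw [hpar, hchild, hfw0]
          simp
  · -- linear independence
    rw [Fintype.linearIndependent_iff]
    intro g hg
    have hgw : ∀ s : Fin d,
        (∑ t : Fin (d - 1), g t * flift d h k y v ⟨t.1, by have := t.isLt; omega⟩
          ⟨t.1 + 1, by have := t.isLt; omega⟩ (probe v s (l0 : ℕ) hlen)) = 0 := by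
      intro s
      have := congrFun hg (probe v s (l0 : ℕ) hlen)
      rw [Finset.sum_apply] at this
      simpa using this
    have hkey : ∀ s : Fin d,
        (if hs : (s : ℕ) < d - 1 then g ⟨(s : ℕ), hs⟩ else 0)
          - (if hs : 0 < (s : ℕ) then g ⟨(s : ℕ) - 1, by omega⟩ else 0) = 0 := by
      intro s
      have hgs := hgw s
      have hpt : ∀ t : Fin (d - 1), g t * flift d h k y v ⟨t.1, by have := t.isLt; omega⟩
          ⟨t.1 + 1, by have := t.isLt; omega⟩ (probe v s (l0 : ℕ) hlen)
          = (if (t : ℕ) = (s : ℕ) then g t * y l0 else 0)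
            + (if (t : ℕ) = (s : ℕ) - 1 ∧ 0 < (s : ℕ) then -(g t * y l0) else 0) := by
        intro t
        rw [flift_probe y v _ _ (by simp [Fin.ext_iff]) s (l0 : ℕ) hlen l0.isLt]
        by_cases h1 : (t : ℕ) = (s : ℕ)
        · rw [if_pos (by simp [Fin.ext_iff, h1]), if_pos h1,
            if_neg (by omega : ¬((t : ℕ) = (s : ℕ) - 1 ∧ 0 < (s : ℕ)))]
          simp
        · rw [if_neg (by simp [Fin.ext_iff]; omega), if_neg h1]
          by_cases h2 : (t : ℕ) + 1 = (s : ℕ)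
          · rw [if_pos (by simp [Fin.ext_iff, h2]),
              if_pos (by omega : (t : ℕ) = (s : ℕ) - 1 ∧ 0 < (s : ℕ))]
            simp
          · rw [if_neg (by simp [Fin.ext_iff]; omega),
              if_neg (by omega : ¬((t : ℕ) = (s : ℕ) - 1 ∧ 0 < (s : ℕ)))]
            simp
      rw [Finset.sum_congr rfl (fun t _ => hpt t), Finset.sum_add_distrib,
        sum_if_nat (s : ℕ) (fun t => g t * y l0)] at hgs
      by_cases h0 : 0 < (s : ℕ)
      · have hcong : ∀ t : Fin (d - 1),
            (if (t : ℕ) = (s : ℕ) - 1 ∧ 0 < (s : ℕ) then -(g t * y l0) else 0)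
            = (if (t : ℕ) = (s : ℕ) - 1 then -(g t * y l0) else 0) := by
          intro t
          simp [h0]
        rw [Finset.sum_congr rfl (fun t _ => hcong t),
          sum_if_nat ((s : ℕ) - 1) (fun t => -(g t * y l0)),
          dif_pos (by have := s.isLt; omega : (s : ℕ) - 1 < d - 1)] at hgs
        rw [dif_pos h0]
        split_ifs with hs1
        · rw [dif_pos hs1] at hgs
          have hmul : (g ⟨(s : ℕ), hs1⟩ - g ⟨(s : ℕ) - 1, by omega⟩) * y l0 = 0 := by
            linear_combination hgs
          rcases mul_eq_zero.1 hmul with hgg | hyy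
          · exact hgg
          · exact absurd hyy hl0
        · rw [dif_neg hs1] at hgs
          have hmul : (0 - g ⟨(s : ℕ) - 1, by omega⟩) * y l0 = 0 := by
            linear_combination hgs
          rcases mul_eq_zero.1 hmul with hgg | hyy
          · exact hgg
          · exact absurd hyy hl0
      · have hs1 : (s : ℕ) < d - 1 := by have := s.isLt; omega
        have hz : ∀ t : Fin (d - 1),
            (if (t : ℕ) = (s : ℕ) - 1 ∧ 0 < (s : ℕ) then -(g t * y l0) else 0) = 0 := by
          intro t
          rw [if_neg (by omega)]
        rw [Finset.sum_congr rfl (fun t _ => hz t), Finset.sum_const, dif_pos hs1] at hgs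
        rw [dif_pos hs1, dif_neg h0]
        simp only [smul_zero, add_zero] at hgs
        have hmul : (g ⟨(s : ℕ), hs1⟩ - 0) * y l0 = 0 := by linear_combination hgs
        rcases mul_eq_zero.1 hmul with hgg | hyy
        · exact hgg
        · exact absurd hyy hl0
    have hzero : ∀ n : ℕ, ∀ hn : n < d - 1, g ⟨n, hn⟩ = 0 := by
      intro n
      induction n with
      | zero =>
        intro hn
        have hk0 := hkey ⟨0, by omega⟩
        rw [dif_pos (by simpa using hn), dif_neg (by simp)] at hk0
        simpa using hk0
      | succ m ih =>
        intro hn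
        have hk0 := hkey ⟨m + 1, by omega⟩
        rw [dif_pos (by simpa using hn), dif_pos (by simp)] at hk0
        have hm : g ⟨m, by omega⟩ = 0 := ih (by omega)
        simp only [Nat.add_sub_cancel] at hk0
        rw [hm] at hk0
        simpa using hk0
    intro t
    exact hzero t.1 t.2
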